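/- arXiv:2604.12853 — 2 statements merged into one kernel-verified Lean document; each statement's English description precedes it below -/
import Mathlib

section
/- In the standing setup, the vector α defined by α(a,b) = (α_X(a)·α_Y(b)/α_Z(c))·φ(a,b) for (a,b) ∈ Δ' with c = f(a) = g(b) and α_Z(c) > 0, and α(a,b) = 0 otherwise, is a probability distribution on Δ' whose marginals are the given initial distributions: Σ_{b: (a,b)∈Δ'} α(a,b) = α_X(a) for every a ∈ A and Σ_{a: (a,b)∈Δ'} α(a,b) = α_Y(b) for every b ∈ B. -/
open MeasureTheory Filter Topology
open scoped ENNReal Classical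

/-- A probability vector on a countable state space. -/
def IsProbVec {U : Type*} (v : U → ℝ≥0∞) : Prop := ∑' u, v u = 1

/-- A row-stochastic matrix on a countable state space. -/
def IsStochastic {U : Type*} (P : U → U → ℝ≥0∞) : Prop := ∀ u, ∑' w, P u w = 1

/-- `μ` is the law of the time-homogeneous Markov chain `MC(v,P)`. -/
def IsMarkovChain {U : Type*} [MeasurableSpace U]
    (v : U → ℝ≥0∞) (P : U → U → ℝ≥0∞) (μ : Measure (ℕ → U)) : Prop :=
  IsProbabilityMeasure μ ∧ IsProbVec v ∧ IsStochastic P ∧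
    ∀ (k : ℕ) (a : ℕ → U),
      μ {ω | ∀ i ≤ k, ω i = a i} = v (a 0) * ∏ i ∈ Finset.range k, P (a i) (a (i + 1))

/-- `Δ(f,g) = {(a,b) : f a = g b}`. -/
abbrev Delta {A B C : Type*} (f : A → C) (g : B → C) :=
  {p : A × B // f p.1 = g p.2}

/-- The matrix `R` on `Δ(f,g)`:
`R((a,b),(a',b')) = P_X(a,a') * P_Y(b,b') / P_Z(f a, f a')` when `P_Z(f a, f a') > 0`,
else `0`. -/
noncomputable def Rmat {A B C : Type*} (PX : A → A → ℝ≥0∞) (PY : B → B → ℝ≥0∞)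
    (PZ : C → C → ℝ≥0∞) (f : A → C) (g : B → C) (d e : Delta f g) : ℝ≥0∞ :=
  if PZ (f d.1.1) (f e.1.1) ≠ 0 then
    PX d.1.1 e.1.1 * PY d.1.2 e.1.2 / PZ (f d.1.1) (f e.1.1)
  else 0

/-- `phim R m = R^m 1`, computed coordinatewise in `[0,∞]`. -/
noncomputable def phim {D : Type*} (R : D → D → ℝ≥0∞) : ℕ → D → ℝ≥0∞
  | 0 => fun _ => 1
  | m + 1 => fun d => ∑' e, R d e * phim R m e

/-- The initial distribution `α` of the coupled chain on `Δ'`: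
`α(a,b) = (α_X(a) * α_Y(b) / α_Z(c)) * φ(a,b)` when `α_Z(c) > 0`, and `0` otherwise. -/
noncomputable def alphaW {A B C : Type*} (αX : A → ℝ≥0∞) (αY : B → ℝ≥0∞) (αZ : C → ℝ≥0∞)
    (f : A → C) (g : B → C) (φ : Delta f g → ℝ≥0∞) (d : Delta f g) : ℝ≥0∞ :=
  if αZ (f d.1.1) ≠ 0 then αX d.1.1 * αY d.1.2 / αZ (f d.1.1) * φ d else 0

/-!
For every `m`, the vector `α_m(a,b) = α_X(a) α_Y(b) / α_Z(c) · (R^m 1)(a,b)` already has the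
marginals `α_X` and `α_Y`. Expanding `Σ_b α_Y(b) (R^m 1)(a,b)` over paths, the `Y`-paths lying
over a fixed `Z`-path `c₀ → ⋯ → c_k` carry total mass `α_Z(c₀) ∏ P_Z(cᵢ, cᵢ₊₁)` because
`g(Ȳ) =ᵈ Z̄`; this cancels the denominators of `R` and leaves `α_Z(f a) Σ ∏ P_X = α_Z(f a)`, where
visibility of every state guarantees `P_Z(f a, f a') > 0` whenever `P_X(a, a') > 0`.
In the limit `m → ∞` the marginals survive because `α_m(a,b) ≤ α_Y(b)` and `α_Y` is summable,
so dominated convergence applies to the row sums, and symmetrically to the column sums.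
-/

noncomputable def pathWeight {U : Type*} (v : U → ℝ≥0∞) (P : U → U → ℝ≥0∞) {k : ℕ}
    (t : Fin (k + 1) → U) : ℝ≥0∞ :=
  v (t 0) * ∏ i : Fin k, P (t i.castSucc) (t i.succ)

section PathWeight

variable {U : Type*} {v : U → ℝ≥0∞} {P : U → U → ℝ≥0∞} {k : ℕ}

theorem pathWeight_cons (u : U) (t : Fin (k + 1) → U) :
    pathWeight v P (Fin.cons u t : Fin (k + 2) → U) = v u * pathWeight (P u) P t := by
  simp only [pathWeight, Fin.prod_univ_succ, Fin.cons_zero, Fin.castSucc_zero, Fin.cons_succ,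
    ← Fin.succ_castSucc]

theorem pathWeight_snoc (t : Fin (k + 1) → U) (u : U) :
    pathWeight v P (Fin.snoc t u : Fin (k + 2) → U) = pathWeight v P t * P (t (Fin.last k)) u := by
  simp only [pathWeight, Fin.prod_univ_castSucc, Fin.snoc_castSucc, ← Fin.castSucc_zero,
    Fin.snoc_last, Fin.succ_castSucc, mul_assoc, Fin.succ_last]

end PathWeight

theorem measurableSet_setOf_forall_fin_eq {U : Type*} [MeasurableSpace U]
    [MeasurableSingletonClass U] {k : ℕ} (t : Fin (k + 1) → U) :
    MeasurableSet {ω : ℕ → U | ∀ i : Fin (k + 1), ω i = t i} := by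
  simp only [Set.ofPred_forall]
  exact MeasurableSet.iInter fun i => measurable_pi_apply _ (measurableSet_singleton _)

namespace IsMarkovChain

variable {U : Type*} [MeasurableSpace U] {v : U → ℝ≥0∞} {P : U → U → ℝ≥0∞} {μ : Measure (ℕ → U)}

theorem init_ne_top (h : IsMarkovChain v P μ) (u : U) : v u ≠ ⊤ :=
  ENNReal.ne_top_of_tsum_ne_top (h.2.1.symm ▸ ENNReal.one_ne_top) u

theorem transition_ne_top (h : IsMarkovChain v P μ) (u u' : U) : P u u' ≠ ⊤ :=
  ENNReal.ne_top_of_tsum_ne_top ((h.2.2.1 u).symm ▸ ENNReal.one_ne_top) u'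

theorem measure_cylinder (h : IsMarkovChain v P μ) {k : ℕ} (t : Fin (k + 1) → U) :
    μ {ω | ∀ i : Fin (k + 1), ω i = t i} = pathWeight v P t := by
  have hclamp : ∀ i : Fin (k + 1), Fin.clamp i k = i := fun i =>
    Fin.ext (by simp [Fin.clamp, Nat.le_of_lt_succ i.2])
  have hcyl : {ω : ℕ → U | ∀ i : Fin (k + 1), ω i = t i}
      = {ω | ∀ i ≤ k, ω i = t (Fin.clamp i k)} := by
    ext ω
    simp only [Set.mem_ofPred_eq]
    refine ⟨fun hω i hi => ?_, fun hω i => ?_⟩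
    · simpa [Fin.clamp, hi] using hω (Fin.clamp i k)
    · simpa [hclamp] using hω i (Nat.le_of_lt_succ i.2)
  rw [hcyl, h.2.2.2, pathWeight, ← Fin.prod_univ_eq_prod_range]
  congr 1
  refine Finset.prod_congr rfl fun i _ => ?_
  rw [← hclamp i.castSucc, ← hclamp i.succ]
  rfl

theorem measure_setOf_eq_tsum [Countable U] [MeasurableSingletonClass U]
    (h : IsMarkovChain v P μ) {k : ℕ} (E : (Fin (k + 1) → U) → Prop) :
    μ {ω | E fun i => ω i} = ∑' t, if E t then pathWeight v P t else 0 := by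
  have hproj : Measurable fun (ω : ℕ → U) (i : Fin (k + 1)) => ω i :=
    measurable_pi_lambda _ fun i => measurable_pi_apply _
  rw [← Set.preimage_ofPred_eq, ← tsum_measure_preimage_singleton (Set.to_countable _)
    fun t _ => hproj (measurableSet_singleton t),
    tsum_subtype _ fun t => μ ((fun (ω : ℕ → U) (i : Fin (k + 1)) => ω i) ⁻¹' {t})]
  refine tsum_congr fun t => ?_
  simp only [Set.indicator, Set.mem_ofPred_eq, ← h.measure_cylinder t, Set.preimage,
    Set.mem_singleton_iff, funext_iff]

variable {C : Type*} [MeasurableSpace C] [MeasurableSingletonClass C]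
  {αZ : C → ℝ≥0∞} {PZ : C → C → ℝ≥0∞} {μZ : Measure (ℕ → C)}

theorem pathWeight_eq_measure_comp [Countable U] [MeasurableSingletonClass U]
    (hZ : IsMarkovChain αZ PZ μZ) (f : U → C) (hf : μ.map (fun ω n => f (ω n)) = μZ)
    {k : ℕ} (w : Fin (k + 1) → C) :
    pathWeight αZ PZ w = μ {ω | ∀ i : Fin (k + 1), f (ω i) = w i} := by
  rw [← hZ.measure_cylinder, ← hf, Measure.map_apply _ (measurableSet_setOf_forall_fin_eq w)]
  · rfl
  · exact measurable_pi_lambda _ fun n => (measurable_of_countable f).comp (measurable_pi_apply n)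

theorem lumped_transition_ne_zero [Countable U] [MeasurableSingletonClass U]
    (h : IsMarkovChain v P μ) (hZ : IsMarkovChain αZ PZ μZ) (f : U → C)
    (hf : μ.map (fun ω n => f (ω n)) = μZ) {u u' : U} (hu : ∃ t, μ {ω | ω t = u} ≠ 0)
    (hP : P u u' ≠ 0) : PZ (f u) (f u') ≠ 0 := by
  obtain ⟨t, ht⟩ := hu
  intro hPZ
  apply ht
  rw [show {ω : ℕ → U | ω t = u} = {ω | (fun i : Fin (t + 1) => ω i) (Fin.last t) = u} from rfl,
    h.measure_setOf_eq_tsum fun s => s (Fin.last t) = u, ENNReal.tsum_eq_zero]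
  intro s
  split_ifs with hs
  · -- the path `s` followed by `u'` projects under `f` onto a path through the null step
    -- `f u → f u'` of `Z̄`
    have hnull : pathWeight v P (Fin.snoc s u' : Fin (t + 2) → U) = 0 := by
      refine nonpos_iff_eq_zero.mp ?_
      calc pathWeight v P (Fin.snoc s u' : Fin (t + 2) → U)
          ≤ μ {ω | ∀ i : Fin (t + 2), f (ω i) = f ((Fin.snoc s u' : Fin (t + 2) → U) i)} := by
            rw [← h.measure_cylinder]
            exact measure_mono fun ω hω i => congrArg f (hω i)
        _ = 0 := by
            rw [← hZ.pathWeight_eq_measure_comp f hf]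
            change pathWeight αZ PZ (f ∘ Fin.snoc s u') = 0
            rw [Fin.comp_snoc, pathWeight_snoc, Function.comp_apply, hs, hPZ, mul_zero]
    rw [pathWeight_snoc, hs] at hnull
    exact (mul_eq_zero.mp hnull).resolve_right hP
  · rfl

end IsMarkovChain

section FiberEvolution

variable {B C : Type*} (PY : B → B → ℝ≥0∞) (g : B → C)

noncomputable def fiberStep (c : C) (β : B → ℝ≥0∞) (b' : B) : ℝ≥0∞ :=
  if g b' = c then ∑' b, β b * PY b b' else 0

noncomputable def fiberEvol : (k : ℕ) → (Fin (k + 1) → C) → (B → ℝ≥0∞) → B → ℝ≥0∞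
  | 0, _, β => β
  | k + 1, w, β => fiberEvol k (Fin.tail w) (fiberStep PY g (w 1) β)

variable (PZ : C → C → ℝ≥0∞) in
/-- The induction on `m` for `R^m 1` runs over all weights with this property: it holds for `α_Y`
restricted to `g ⁻¹' {c}` and is stable under `fiberStep`. -/
def HasLumpedMass (c : C) (β : B → ℝ≥0∞) : Prop :=
  ∀ (k : ℕ) (w : Fin (k + 1) → C), w 0 = c →
    ∑' b, fiberEvol PY g k w β b = pathWeight (fun _ => ∑' b, β b) PZ w

variable {PY g}

theorem fiberStep_ne_zero {c : C} {β : B → ℝ≥0∞} {b : B} (h : fiberStep PY g c β b ≠ 0) :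
    g b = c := by
  by_contra hb
  exact h (if_neg hb)

theorem tsum_fiberEvol [Countable B] (k : ℕ) (w : Fin (k + 1) → C) (β : B → ℝ≥0∞)
    (hβ : ∀ b, β b ≠ 0 → g b = w 0) :
    ∑' b, fiberEvol PY g k w β b
      = ∑' t : Fin (k + 1) → B, if ∀ i, g (t i) = w i then pathWeight β PY t else 0 := by
  induction k generalizing β with
  | zero =>
    rw [← (Equiv.funUnique (Fin 1) B).symm.tsum_eq]
    refine tsum_congr fun b => ?_
    by_cases hb : g b = w 0
    · simp [fiberEvol, pathWeight, hb]
    · simp [fiberEvol, hb, not_ne_iff.mp ((hβ b).mt hb)]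
  | succ k ih =>
    rw [fiberEvol, ih (Fin.tail w) (fiberStep PY g (w 1) β) fun b => fiberStep_ne_zero,
      ← (Fin.consEquiv fun _ : Fin (k + 2) => B).tsum_eq (α := ℝ≥0∞),
      ENNReal.tsum_prod', ENNReal.tsum_comm]
    refine tsum_congr fun t => ?_
    have hcons : ∀ b, (Fin.consEquiv fun _ : Fin (k + 2) => B) (b, t) = Fin.cons b t :=
      fun b => rfl
    simp only [hcons, Fin.forall_iff_succ (n := k + 1), Fin.cons_zero, Fin.cons_succ,
      pathWeight_cons]
    by_cases ht : ∀ i, g (t i) = w i.succ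
    · have ht0 : g (t 0) = w 1 := ht 0
      simp only [Fin.tail, ht, and_true, forall_const, if_true]
      rw [pathWeight, fiberStep, if_pos ht0, ← ENNReal.tsum_mul_right]
      refine tsum_congr fun b => ?_
      by_cases hb : g b = w 0
      · rw [if_pos hb, pathWeight, mul_assoc]
      · rw [if_neg hb, not_ne_iff.mp ((hβ b).mt hb), zero_mul, zero_mul]
    · simp [Fin.tail, ht]

variable {PZ : C → C → ℝ≥0∞}

namespace HasLumpedMass

variable {c : C} {β : B → ℝ≥0∞}

theorem tsum_fiberStep (h : HasLumpedMass PY g PZ c β) (c' : C) :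
    ∑' b, fiberStep PY g c' β b = (∑' b, β b) * PZ c c' := by
  simpa [fiberEvol, pathWeight] using h 1 ![c, c'] rfl

theorem fiberStep (h : HasLumpedMass PY g PZ c β) (c' : C) :
    HasLumpedMass PY g PZ c' (fiberStep PY g c' β) := by
  intro k w hw
  have hcons := h (k + 1) (Fin.cons c w) rfl
  rw [fiberEvol, Fin.tail_cons, Fin.cons_one, hw, pathWeight_cons] at hcons
  rw [hcons, h.tsum_fiberStep, pathWeight, pathWeight, hw, mul_assoc]

end HasLumpedMass

variable [Countable B] [MeasurableSpace B] [MeasurableSingletonClass B]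
  [MeasurableSpace C] [MeasurableSingletonClass C]
  {αY : B → ℝ≥0∞} {μY : Measure (ℕ → B)} {αZ : C → ℝ≥0∞} {μZ : Measure (ℕ → C)}

theorem IsMarkovChain.tsum_fiberEvol_eq_pathWeight (hY : IsMarkovChain αY PY μY)
    (hZ : IsMarkovChain αZ PZ μZ) (hg : μY.map (fun ω n => g (ω n)) = μZ) {k : ℕ}
    (w : Fin (k + 1) → C) :
    ∑' b, fiberEvol PY g k w (fun b => if g b = w 0 then αY b else 0) b = pathWeight αZ PZ w := by
  rw [tsum_fiberEvol _ _ _ fun b hb => not_not.mp fun h => hb (if_neg h),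
    hZ.pathWeight_eq_measure_comp g hg, hY.measure_setOf_eq_tsum fun t => ∀ i, g (t i) = w i]
  refine tsum_congr fun t => ?_
  split_ifs with ht
  · rw [pathWeight, pathWeight, if_pos (ht 0)]
  · rfl

theorem IsMarkovChain.tsum_fiber_init_eq (hY : IsMarkovChain αY PY μY)
    (hZ : IsMarkovChain αZ PZ μZ) (hg : μY.map (fun ω n => g (ω n)) = μZ) (c : C) :
    ∑' b, (if g b = c then αY b else 0) = αZ c := by
  simpa [fiberEvol, pathWeight] using hY.tsum_fiberEvol_eq_pathWeight hZ hg fun _ : Fin 1 => c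

theorem IsMarkovChain.hasLumpedMass (hY : IsMarkovChain αY PY μY)
    (hZ : IsMarkovChain αZ PZ μZ) (hg : μY.map (fun ω n => g (ω n)) = μZ) (c : C) :
    HasLumpedMass PY g PZ c fun b => if g b = c then αY b else 0 := by
  rintro k w rfl
  rw [hY.tsum_fiberEvol_eq_pathWeight hZ hg, hY.tsum_fiber_init_eq hZ hg]
  rfl

end FiberEvolution

theorem ENNReal.div_mul_mul_cancel_of_imp {x y : ℝ≥0∞} (s : ℝ≥0∞) (hxy : y = 0 → x = 0)
    (hy : y ≠ ⊤) : x / y * (s * y) = x * s := by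
  by_cases hy0 : y = 0
  · simp [hy0, hxy hy0]
  · rw [mul_comm s, ← mul_assoc, ENNReal.div_mul_cancel hy0 hy]

section RowSums

variable {A B C : Type*} {PX : A → A → ℝ≥0∞} {PY : B → B → ℝ≥0∞} {PZ : C → C → ℝ≥0∞}
  {f : A → C} {g : B → C}

theorem tsum_delta (F : Delta f g → ℝ≥0∞) :
    ∑' d, F d = ∑' (a : A) (b : {b // f a = g b}), F ⟨(a, b), b.2⟩ := by
  rw [← (Equiv.subtypeProdEquivSigmaSubtype fun a b => f a = g b).symm.tsum_eq,
    ENNReal.tsum_sigma']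
  rfl

theorem tsum_mul_Rmat (hPXPZ : ∀ a a', PX a a' ≠ 0 → PZ (f a) (f a') ≠ 0) {a : A}
    {β : B → ℝ≥0∞} (hβ : ∀ b, β b ≠ 0 → g b = f a) (e : Delta f g) :
    ∑' b : {b // f a = g b}, β b * Rmat PX PY PZ f g ⟨(a, b), b.2⟩ e
      = PX a e.1.1 / PZ (f a) (f e.1.1) * fiberStep PY g (f e.1.1) β e.1.2 := by
  rw [fiberStep, if_pos e.2.symm]
  by_cases hz : PZ (f a) (f e.1.1) = 0
  · have hx : PX a e.1.1 = 0 := not_ne_iff.mp fun hx => hPXPZ _ _ hx hz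
    simp [Rmat, hz, hx]
  · simp only [Rmat, if_pos hz]
    rw [← ENNReal.tsum_mul_left]
    refine (tsum_subtype_eq_of_support_subset (s := {b | f a = g b})
      (f := fun b => β b * (PX a e.1.1 * PY b e.1.2 / PZ (f a) (f e.1.1))) fun b hb =>
      (hβ b (left_ne_zero_of_mul hb)).symm).trans (tsum_congr fun b => ?_)
    simp only [div_eq_mul_inv]
    ring

theorem tsum_mul_phim_Rmat (hPX : IsStochastic PX) (hPZ : ∀ c c', PZ c c' ≠ ⊤)
    (hPXPZ : ∀ a a', PX a a' ≠ 0 → PZ (f a) (f a') ≠ 0) (m : ℕ) {a : A} {β : B → ℝ≥0∞}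
    (hβ : HasLumpedMass PY g PZ (f a) β) (hsupp : ∀ b, β b ≠ 0 → g b = f a) :
    ∑' b : {b // f a = g b}, β b * phim (Rmat PX PY PZ f g) m ⟨(a, b), b.2⟩ = ∑' b, β b := by
  induction m generalizing a β with
  | zero =>
    simp only [phim, mul_one]
    exact tsum_subtype_eq_of_support_subset fun b hb => (hsupp b hb).symm
  | succ m ih =>
    calc ∑' b : {b // f a = g b}, β b * phim (Rmat PX PY PZ f g) (m + 1) ⟨(a, b), b.2⟩
        = ∑' e, (∑' b : {b // f a = g b}, β b * Rmat PX PY PZ f g ⟨(a, b), b.2⟩ e)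
            * phim (Rmat PX PY PZ f g) m e := by
          simp only [phim, ← ENNReal.tsum_mul_left, ← ENNReal.tsum_mul_right, mul_assoc]
          exact ENNReal.tsum_comm
      _ = ∑' (a' : A) (b' : {b' // f a' = g b'}), PX a a' / PZ (f a) (f a')
            * (fiberStep PY g (f a') β b' * phim (Rmat PX PY PZ f g) m ⟨(a', b'), b'.2⟩) := by
          rw [tsum_delta]
          simp only [tsum_mul_Rmat hPXPZ hsupp, mul_assoc]
      _ = ∑' a', PX a a' / PZ (f a) (f a') * ((∑' b, β b) * PZ (f a) (f a')) := by
          simp only [ENNReal.tsum_mul_left, ih (hβ.fiberStep _) fun _ => fiberStep_ne_zero,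
            hβ.tsum_fiberStep]
      _ = ∑' a', PX a a' * ∑' b, β b := by
          refine tsum_congr fun a' => ENNReal.div_mul_mul_cancel_of_imp _ ?_ (hPZ _ _)
          exact fun hz => not_ne_iff.mp fun hx => hPXPZ _ _ hx hz
      _ = ∑' b, β b := by rw [ENNReal.tsum_mul_right, hPX a, one_mul]

end RowSums

section Swap

variable {A B C : Type*} {f : A → C} {g : B → C}

def Delta.swap : Delta f g ≃ Delta g f where
  toFun d := ⟨(d.1.2, d.1.1), d.2.symm⟩
  invFun d := ⟨(d.1.2, d.1.1), d.2.symm⟩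

def Delta.fiberFstEquiv (a : A) : {b // f a = g b} ≃ {d : Delta f g // d.1.1 = a} where
  toFun b := ⟨⟨(a, b), b.2⟩, rfl⟩
  invFun d := ⟨d.1.1.2, (congrArg f d.2).symm.trans d.1.2⟩
  right_inv := by rintro ⟨⟨⟨a', b⟩, h⟩, rfl⟩; rfl

theorem phim_equiv {D D' : Type*} (σ : D ≃ D') {R : D → D → ℝ≥0∞} {R' : D' → D' → ℝ≥0∞}
    (hR : ∀ d e, R' (σ d) (σ e) = R d e) (m : ℕ) (d : D) : phim R' m (σ d) = phim R m d := by
  induction m generalizing d with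
  | zero => rfl
  | succ m ih =>
    simp only [phim]
    rw [← σ.tsum_eq]
    simp only [hR, ih]

theorem alphaW_phim_swap (αX : A → ℝ≥0∞) (αY : B → ℝ≥0∞) (αZ : C → ℝ≥0∞)
    (PX : A → A → ℝ≥0∞) (PY : B → B → ℝ≥0∞) (PZ : C → C → ℝ≥0∞) (m : ℕ) (d : Delta f g) :
    alphaW αY αX αZ g f (phim (Rmat PY PX PZ g f) m) (Delta.swap d)
      = alphaW αX αY αZ f g (phim (Rmat PX PY PZ f g) m) d := by
  have hR : ∀ d e : Delta f g,
      Rmat PY PX PZ g f (Delta.swap d) (Delta.swap e) = Rmat PX PY PZ f g d e := by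
    intro d e
    simp only [Rmat, Delta.swap, Equiv.coe_fn_mk, ← d.2, ← e.2, mul_comm (PY _ _)]
  rw [alphaW, alphaW, ← phim_equiv Delta.swap hR]
  simp only [Delta.swap, Equiv.coe_fn_mk, ← d.2, mul_comm (αY _)]

end Swap

section LevelMarginals

variable {A B C : Type*} [Countable A] [Countable B]
  [MeasurableSpace A] [MeasurableSingletonClass A]
  [MeasurableSpace B] [MeasurableSingletonClass B]
  [MeasurableSpace C] [MeasurableSingletonClass C]
  {αX : A → ℝ≥0∞} {PX : A → A → ℝ≥0∞} {μX : Measure (ℕ → A)}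
  {αY : B → ℝ≥0∞} {PY : B → B → ℝ≥0∞} {μY : Measure (ℕ → B)}
  {αZ : C → ℝ≥0∞} {PZ : C → C → ℝ≥0∞} {μZ : Measure (ℕ → C)}
  {f : A → C} {g : B → C}

theorem tsum_alphaW_phim_fiber_fst (hX : IsMarkovChain αX PX μX)
    (hY : IsMarkovChain αY PY μY) (hZ : IsMarkovChain αZ PZ μZ)
    (hfX : μX.map (fun ω n => f (ω n)) = μZ) (hgY : μY.map (fun ω n => g (ω n)) = μZ)
    (hAvis : ∀ a : A, ∃ t : ℕ, μX {ω | ω t = a} ≠ 0) (m : ℕ) (a : A) :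
    ∑' d : {d : Delta f g // d.1.1 = a}, alphaW αX αY αZ f g (phim (Rmat PX PY PZ f g) m) d.1
      = αX a := by
  rw [← (Delta.fiberFstEquiv a).tsum_eq]
  by_cases hz : αZ (f a) = 0
  · have hαX : αX a = 0 := by
      refine nonpos_iff_eq_zero.mp ?_
      calc αX a = if f a = f a then αX a else 0 := (if_pos rfl).symm
        _ ≤ ∑' a', if f a' = f a then αX a' else 0 := ENNReal.le_tsum a
        _ = 0 := by rw [hX.tsum_fiber_init_eq hZ hfX, hz]
    simp [Delta.fiberFstEquiv, alphaW, hz, hαX]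
  · calc ∑' b : {b // f a = g b}, alphaW αX αY αZ f g (phim (Rmat PX PY PZ f g) m)
            (Delta.fiberFstEquiv a b).1
        = ∑' b : {b // f a = g b}, αX a / αZ (f a)
            * ((if g b = f a then αY b else 0) * phim (Rmat PX PY PZ f g) m ⟨(a, b), b.2⟩) := by
          refine tsum_congr fun b => ?_
          rw [Delta.fiberFstEquiv, Equiv.coe_fn_mk, alphaW, if_pos hz, if_pos b.2.symm]
          simp only [div_eq_mul_inv]
          ring
      _ = αX a / αZ (f a) * αZ (f a) := by
          rw [ENNReal.tsum_mul_left, tsum_mul_phim_Rmat hX.2.2.1 hZ.transition_ne_top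
            (fun _ _ => hX.lumped_transition_ne_zero hZ f hfX (hAvis _)) m
            (hY.hasLumpedMass hZ hgY _) fun b hb => not_not.mp fun h => hb (if_neg h),
            hY.tsum_fiber_init_eq hZ hgY]
      _ = αX a := ENNReal.div_mul_cancel hz (hZ.init_ne_top _)

theorem tsum_alphaW_phim_fiber_snd (hX : IsMarkovChain αX PX μX)
    (hY : IsMarkovChain αY PY μY) (hZ : IsMarkovChain αZ PZ μZ)
    (hfX : μX.map (fun ω n => f (ω n)) = μZ) (hgY : μY.map (fun ω n => g (ω n)) = μZ)
    (hBvis : ∀ b : B, ∃ t : ℕ, μY {ω | ω t = b} ≠ 0) (m : ℕ) (b : B) :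
    ∑' d : {d : Delta f g // d.1.2 = b}, alphaW αX αY αZ f g (phim (Rmat PX PY PZ f g) m) d.1
      = αY b := by
  rw [← tsum_alphaW_phim_fiber_fst hY hX hZ hgY hfX hBvis m b,
    ← (Delta.swap.subtypeEquiv fun _ => Iff.rfl :
      {d : Delta f g // d.1.2 = b} ≃ {d : Delta g f // d.1.1 = b}).tsum_eq]
  exact tsum_congr fun d => (alphaW_phim_swap αX αY αZ PX PY PZ m d.1).symm

end LevelMarginals

theorem tendsto_alphaW {A B C : Type*} {αX : A → ℝ≥0∞} {αY : B → ℝ≥0∞} (αZ : C → ℝ≥0∞)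
    {f : A → C} {g : B → C} (hαX : ∀ a, αX a ≠ ⊤) (hαY : ∀ b, αY b ≠ ⊤)
    {ψ : ℕ → Delta f g → ℝ≥0∞} {φ : Delta f g → ℝ≥0∞}
    (hψ : ∀ d, Tendsto (fun m => ψ m d) atTop (𝓝 (φ d))) (d : Delta f g) :
    Tendsto (fun m => alphaW αX αY αZ f g (ψ m) d) atTop (𝓝 (alphaW αX αY αZ f g φ d)) := by
  unfold alphaW
  split_ifs with hz
  · exact ENNReal.Tendsto.const_mul (hψ d)
      (Or.inr (ENNReal.div_ne_top (ENNReal.mul_ne_top (hαX _) (hαY _)) hz))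
  · exact tendsto_const_nhds

theorem ENNReal.tsum_eq_of_tendsto_of_le {ι : Type*} {F : ℕ → ι → ℝ≥0∞} {G bound : ι → ℝ≥0∞}
    {c : ℝ≥0∞} (hF : ∀ i, Tendsto (fun m => F m i) atTop (𝓝 (G i)))
    (hle : ∀ m i, F m i ≤ bound i) (hbound : ∑' i, bound i ≠ ⊤) (hc : ∀ m, ∑' i, F m i = c) :
    ∑' i, G i = c := by
  refine le_antisymm ?_ ?_
  · rw [ENNReal.tsum_eq_iSup_sum]
    exact iSup_le fun s => le_of_tendsto' (tendsto_finsetSum s fun i _ => hF i) fun m =>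
      (ENNReal.sum_le_tsum s).trans (hc m).le
  · have htail : ∀ s : Finset ι, c ≤ ∑' i, G i + ∑' i : {i // i ∉ s}, bound i := by
      intro s
      have hm : ∀ m, c ≤ ∑ i ∈ s, F m i + ∑' i : {i // i ∉ s}, bound i := fun m =>
        calc c = ∑ i ∈ s, F m i + ∑' i : {i // i ∉ s}, F m i :=
              (hc m).symm.trans (ENNReal.sum_add_tsum_compl s (F m)).symm
          _ ≤ _ := add_le_add le_rfl (ENNReal.tsum_le_tsum fun i => hle m i)
      exact (ge_of_tendsto' ((tendsto_finsetSum s fun i _ => hF i).add_const _) hm).trans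
        (add_le_add (ENNReal.sum_le_tsum s) le_rfl)
    have hlim := (tendsto_const_nhds (x := ∑' i, G i)).add
      (ENNReal.tendsto_tsum_compl_atTop_zero hbound)
    rw [add_zero] at hlim
    exact ge_of_tendsto' hlim htail

theorem tsum_fiber_eq_of_tendsto {D A B : Type*} {p : D → A} {q : D → B}
    (hpq : Function.Injective fun d => (p d, q d)) {F : ℕ → D → ℝ≥0∞} {G : D → ℝ≥0∞}
    {μ : A → ℝ≥0∞} {ν : B → ℝ≥0∞} (hF : ∀ d, Tendsto (fun m => F m d) atTop (𝓝 (G d)))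
    (hp : ∀ m a, ∑' d : {d // p d = a}, F m d = μ a)
    (hq : ∀ m b, ∑' d : {d // q d = b}, F m d = ν b) (hν : ∑' b, ν b ≠ ⊤) (a : A) :
    ∑' d : {d // p d = a}, G d = μ a := by
  have hinj : Function.Injective fun d : {d // p d = a} => q d := fun d d' h =>
    Subtype.ext (hpq (Prod.ext (d.2.trans d'.2.symm) h))
  refine ENNReal.tsum_eq_of_tendsto_of_le (F := fun m (d : {d // p d = a}) => F m d)
    (fun d => hF d) (bound := fun d => ν (q d))
    (fun m d => ?_) (ne_top_of_le_ne_top hν (ENNReal.tsum_comp_le_tsum_of_injective hinj ν))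
    (fun m => hp m a)
  exact (ENNReal.le_tsum (f := fun d' : {d' // q d' = q d} => F m d') ⟨d, rfl⟩).trans (hq m _).le

theorem statement_11_general
    {A B C : Type*} [Countable A] [Countable B]
    [MeasurableSpace A] [MeasurableSingletonClass A]
    [MeasurableSpace B] [MeasurableSingletonClass B]
    [MeasurableSpace C] [MeasurableSingletonClass C]
    (αX : A → ℝ≥0∞) (PX : A → A → ℝ≥0∞) (μX : Measure (ℕ → A))
    (αY : B → ℝ≥0∞) (PY : B → B → ℝ≥0∞) (μY : Measure (ℕ → B))
    (αZ : C → ℝ≥0∞) (PZ : C → C → ℝ≥0∞) (μZ : Measure (ℕ → C))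
    (f : A → C) (g : B → C)
    (hX : IsMarkovChain αX PX μX) (hY : IsMarkovChain αY PY μY)
    (hZ : IsMarkovChain αZ PZ μZ)
    (hfX : μX.map (fun ω n => f (ω n)) = μZ)
    (hgY : μY.map (fun ω n => g (ω n)) = μZ)
    (hAvis : ∀ a : A, ∃ t : ℕ, μX {ω | ω t = a} ≠ 0)
    (hBvis : ∀ b : B, ∃ t : ℕ, μY {ω | ω t = b} ≠ 0)
    (φ : Delta f g → ℝ≥0∞)
    (hφ : ∀ d : Delta f g,
      Tendsto (fun m => phim (Rmat PX PY PZ f g) m d) atTop (𝓝 (φ d))) :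
    (∑' d : Delta f g, alphaW αX αY αZ f g φ d = 1) ∧
    (∀ a : A, ∑' d : {d : Delta f g // d.1.1 = a}, alphaW αX αY αZ f g φ d.1 = αX a) ∧
    (∀ b : B, ∑' d : {d : Delta f g // d.1.2 = b}, alphaW αX αY αZ f g φ d.1 = αY b) := by
  have hinj : Function.Injective fun d : Delta f g => (d.1.1, d.1.2) :=
    fun d d' h => Subtype.ext h
  have hinj' : Function.Injective fun d : Delta f g => (d.1.2, d.1.1) :=
    fun d d' h => Subtype.ext (Prod.ext (congrArg Prod.snd h) (congrArg Prod.fst h))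
  have hlim := tendsto_alphaW αZ hX.init_ne_top hY.init_ne_top hφ
  have hfst := tsum_fiber_eq_of_tendsto hinj hlim
    (tsum_alphaW_phim_fiber_fst hX hY hZ hfX hgY hAvis)
    (tsum_alphaW_phim_fiber_snd hX hY hZ hfX hgY hBvis) (hY.2.1.symm ▸ ENNReal.one_ne_top)
  have hsnd := tsum_fiber_eq_of_tendsto hinj' hlim
    (tsum_alphaW_phim_fiber_snd hX hY hZ hfX hgY hBvis)
    (tsum_alphaW_phim_fiber_fst hX hY hZ hfX hgY hAvis) (hX.2.1.symm ▸ ENNReal.one_ne_top)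
  refine ⟨?_, hfst, hsnd⟩
  rw [← ENNReal.tsum_fiberwise _ fun d : Delta f g => d.1.1, ← hX.2.1]
  exact tsum_congr hfst

/-- **`α` is a coupling of `α_X` and `α_Y`.** The vector `α` is a probability distribution
(supported on `Δ'`) whose marginals are the given initial distributions:
`Σ_{b : (a,b) ∈ Δ'} α(a,b) = α_X(a)` for every `a ∈ A` and
`Σ_{a : (a,b) ∈ Δ'} α(a,b) = α_Y(b)` for every `b ∈ B`. -/
theorem statement_11
    {A B C : Type*} [Countable A] [Countable B] [Countable C]
    [MeasurableSpace A] [MeasurableSingletonClass A]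
    [MeasurableSpace B] [MeasurableSingletonClass B]
    [MeasurableSpace C] [MeasurableSingletonClass C]
    (αX : A → ℝ≥0∞) (PX : A → A → ℝ≥0∞) (μX : Measure (ℕ → A))
    (αY : B → ℝ≥0∞) (PY : B → B → ℝ≥0∞) (μY : Measure (ℕ → B))
    (αZ : C → ℝ≥0∞) (PZ : C → C → ℝ≥0∞) (μZ : Measure (ℕ → C))
    (f : A → C) (g : B → C)
    (hX : IsMarkovChain αX PX μX) (hY : IsMarkovChain αY PY μY)
    (hZ : IsMarkovChain αZ PZ μZ)
    (hfX : μX.map (fun ω n => f (ω n)) = μZ)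
    (hgY : μY.map (fun ω n => g (ω n)) = μZ)
    (hAvis : ∀ a : A, ∃ t : ℕ, μX {ω | ω t = a} ≠ 0)
    (hBvis : ∀ b : B, ∃ t : ℕ, μY {ω | ω t = b} ≠ 0)
    (φ : Delta f g → ℝ≥0∞)
    (hφ : ∀ d : Delta f g,
      Tendsto (fun m => phim (Rmat PX PY PZ f g) m d) atTop (𝓝 (φ d)))
    (hφfin : ∀ d : Delta f g, φ d ≠ ⊤) :
    (∑' d : Delta f g, alphaW αX αY αZ f g φ d = 1) ∧
    (∀ a : A, ∑' d : {d : Delta f g // d.1.1 = a}, alphaW αX αY αZ f g φ d.1 = αX a) ∧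
    (∀ b : B, ∑' d : {d : Delta f g // d.1.2 = b}, alphaW αX αY αZ f g φ d.1 = αY b) :=
  statement_11_general αX PX μX αY PY μY αZ PZ μZ f g hX hY hZ hfX hgY hAvis hBvis φ hφ
end

section
/- In the standing setup, the limit vector φ is a non-negative right eigenvector of R with eigenvalue 1 on Δ'; equivalently, the matrix P on Δ' defined by P((a,b),(a',b')) = R((a,b),(a',b'))·φ(a',b')/φ(a,b) is row-stochastic: Σ_{(a',b')∈Δ'} P((a,b),(a',b')) = 1 for every (a,b) ∈ Δ'. -/
open MeasureTheory Filter Topology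
open scoped ENNReal Classical

/-!
Since `R^{m+1} 1 = R (R^m 1)`, the eigenvector equation `R φ = φ` is an exchange of limit and
sum. Fatou's lemma gives `R φ ≤ φ`; the converse holds once the weights
`(a',b') ↦ R((a,b),(a',b')) (R^m 1)(a',b')` are tight uniformly in `m`.

Tightness comes from the lumping. If some history `h` of `Ȳ` reaches `b` with probability `p > 0`,
then, because `g(Ȳ) =ᵈ Z̄`, the probability that `g(Ȳ)` spells a word `w` after `b` is at most
`p⁻¹` times the probability that `Z̄` spells `w` after `g b`. Feeding this bound through the path
expansion of `R^m 1` (by induction on `m`, for all words at once) bounds the sum over `b'` of the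
weights by `κ_Y(b) P_X(a,a')`, and symmetrically the sum over `a'` by `κ_X(a) P_Y(b,b')`; both are
summable. The second claim is the first divided by `φ(a,b)`.
-/

namespace ENNReal

variable {α β ι : Type*}

theorem tsum_eq_of_tendsto_of_tight {F : ℕ → α → ℝ≥0∞} {G : α → ℝ≥0∞} {L : ℝ≥0∞}
    (hF : ∀ a, Tendsto (fun m => F m a) atTop (𝓝 (G a)))
    (hL : Tendsto (fun m => ∑' a, F m a) atTop (𝓝 L))
    (htight : ∀ ε ≠ 0, ∃ s : Finset α, ∀ m, ∑' a : ↥(s : Set α)ᶜ, F m a ≤ ε) :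
    ∑' a, G a = L := by
  have hfin (s : Finset α) : Tendsto (fun m => ∑ a ∈ s, F m a) atTop (𝓝 (∑ a ∈ s, G a)) :=
    tendsto_finsetSum s fun a _ => hF a
  refine le_antisymm ?_ ?_
  · rw [ENNReal.tsum_eq_iSup_sum]
    exact iSup_le fun s =>
      le_of_tendsto_of_tendsto' (hfin s) hL fun m => ENNReal.sum_le_tsum s
  · refine ENNReal.le_of_forall_pos_le_add fun ε hε _ => ?_
    obtain ⟨s, hs⟩ := htight ε (by positivity)
    have hsplit (m : ℕ) : ∑' a, F m a ≤ ∑ a ∈ s, F m a + ε := by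
      rw [← ENNReal.sum_add_tsum_compl s]
      gcongr
      exact hs m
    calc L ≤ ∑ a ∈ s, G a + ε :=
          le_of_tendsto_of_tendsto' hL ((hfin s).add tendsto_const_nhds) hsplit
      _ ≤ ∑' a, G a + ε := by gcongr; exact ENNReal.sum_le_tsum s

theorem exists_tsum_compl_le {u : α → ℝ≥0∞} (hu : ∑' a, u a ≠ ∞) {ε : ℝ≥0∞} (hε : ε ≠ 0) :
    ∃ s : Finset α, ∑' a : ↥(s : Set α)ᶜ, u a ≤ ε :=
  ((tendsto_order.1 (ENNReal.tendsto_tsum_compl_atTop_zero hu)).2 ε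
    (pos_iff_ne_zero.2 hε)).exists.imp fun _ hs => hs.le

theorem tsum_preimage_fst (S : Set α) (T : α × β → ℝ≥0∞) :
    ∑' p : ↥(Prod.fst ⁻¹' S : Set (α × β)), T p = ∑' a : S, ∑' b, T (a, b) := by
  rw [tsum_subtype, tsum_subtype S (fun a => ∑' b, T (a, b)), ENNReal.tsum_prod']
  refine tsum_congr fun a => ?_
  by_cases ha : a ∈ S <;> simp [Set.indicator, ha]

theorem tsum_preimage_snd (S : Set β) (T : α × β → ℝ≥0∞) :
    ∑' p : ↥(Prod.snd ⁻¹' S : Set (α × β)), T p = ∑' b : S, ∑' a, T (a, b) := by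
  rw [tsum_subtype, tsum_subtype S (fun b => ∑' a, T (a, b)), ENNReal.tsum_prod',
    ENNReal.tsum_comm]
  refine tsum_congr fun b => ?_
  by_cases hb : b ∈ S <;> simp [Set.indicator, hb]

theorem tight_of_marginal_le {T : ι → α × β → ℝ≥0∞} {u : α → ℝ≥0∞} {v : β → ℝ≥0∞}
    (hu : ∑' a, u a ≠ ∞) (hv : ∑' b, v b ≠ ∞)
    (hTu : ∀ i a, ∑' b, T i (a, b) ≤ u a) (hTv : ∀ i b, ∑' a, T i (a, b) ≤ v b) (ε : ℝ≥0∞)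
    (hε : ε ≠ 0) : ∃ s : Finset (α × β), ∀ i, ∑' p : ↥(s : Set (α × β))ᶜ, T i p ≤ ε := by
  obtain ⟨sa, hsa⟩ := exists_tsum_compl_le hu (ENNReal.half_pos hε).ne'
  obtain ⟨sb, hsb⟩ := exists_tsum_compl_le hv (ENNReal.half_pos hε).ne'
  refine ⟨sa ×ˢ sb, fun i => ?_⟩
  have hcover : ((sa ×ˢ sb : Finset (α × β)) : Set (α × β))ᶜ ⊆
      Prod.fst ⁻¹' (sa : Set α)ᶜ ∪ Prod.snd ⁻¹' (sb : Set β)ᶜ := by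
    intro p hp
    simp only [Finset.coe_product, Set.mem_compl_iff, Set.mem_prod, not_and_or] at hp
    exact hp
  calc ∑' p : ↥((sa ×ˢ sb : Finset (α × β)) : Set (α × β))ᶜ, T i p
      ≤ ∑' p : ↥(Prod.fst ⁻¹' (sa : Set α)ᶜ : Set (α × β)), T i p
          + ∑' p : ↥(Prod.snd ⁻¹' (sb : Set β)ᶜ : Set (α × β)), T i p :=
        (ENNReal.tsum_mono_subtype _ hcover).trans (ENNReal.tsum_union_le (T i) _ _)
    _ ≤ ∑' a : ↥(sa : Set α)ᶜ, u a + ∑' b : ↥(sb : Set β)ᶜ, v b := by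
        rw [tsum_preimage_fst, tsum_preimage_snd]
        gcongr with a b
        · exact hTu i a
        · exact hTv i b
    _ ≤ ε / 2 + ε / 2 := add_le_add hsa hsb
    _ = ε := ENNReal.add_halves ε

end ENNReal

noncomputable section WordOperators

variable {U V : Type*} (P : U → U → ℝ≥0∞) (h : U → V)

def letterOp (c : V) (ψ : U → ℝ≥0∞) (u : U) : ℝ≥0∞ :=
  ∑' u', (if h u' = c then P u u' else 0) * ψ u'

def wordOp (w : List V) (ψ : U → ℝ≥0∞) : U → ℝ≥0∞ :=
  w.foldr (letterOp P h) ψ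

/-- The probability that the chain started at `u` has `h`-image spelling `w` at times
`1, …, w.length`. -/
def wordProb (w : List V) (u : U) : ℝ≥0∞ :=
  wordOp P h w 1 u

variable {P h}

theorem letterOp_mono {c : V} {ψ ψ' : U → ℝ≥0∞} (hψ : ψ ≤ ψ') :
    letterOp P h c ψ ≤ letterOp P h c ψ' := fun u =>
  ENNReal.tsum_le_tsum fun u' => by gcongr; exact hψ u'

theorem letterOp_congr {c : V} {ψ ψ' : U → ℝ≥0∞} (hψ : ∀ u, h u = c → ψ u = ψ' u) :
    letterOp P h c ψ = letterOp P h c ψ' := by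
  funext u
  refine tsum_congr fun u' => ?_
  by_cases hu' : h u' = c
  · rw [hψ u' hu']
  · simp [hu']

theorem letterOp_tsum_mul {ι : Type*} (c : V) (r : ι → ℝ≥0∞) (ψ : ι → U → ℝ≥0∞) :
    letterOp P h c (fun u => ∑' i, r i * ψ i u) = fun u => ∑' i, r i * letterOp P h c (ψ i) u := by
  funext u
  simp only [letterOp, ← ENNReal.tsum_mul_left]
  rw [ENNReal.tsum_comm]
  exact tsum_congr fun i => tsum_congr fun u' => by ring

theorem letterOp_mul_const (c : V) (ψ : U → ℝ≥0∞) (r : ℝ≥0∞) :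
    letterOp P h c (fun u => ψ u * r) = fun u => letterOp P h c ψ u * r := by
  funext u
  simp only [letterOp, ← ENNReal.tsum_mul_right, mul_assoc]

theorem letterOp_id (P : V → V → ℝ≥0∞) (c : V) (ψ : V → ℝ≥0∞) :
    letterOp P id c ψ = fun z => P z c * ψ c := by
  funext z
  rw [letterOp, tsum_eq_single c fun z' hz => by simp [hz]]
  simp

@[simp] theorem wordOp_nil (ψ : U → ℝ≥0∞) : wordOp P h [] ψ = ψ := rfl

@[simp] theorem wordOp_cons (c : V) (w : List V) (ψ : U → ℝ≥0∞) :
    wordOp P h (c :: w) ψ = letterOp P h c (wordOp P h w ψ) := rfl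

theorem wordOp_append_singleton (w : List V) (c : V) (ψ : U → ℝ≥0∞) :
    wordOp P h (w ++ [c]) ψ = wordOp P h w (letterOp P h c ψ) := by
  simp [wordOp]

theorem wordOp_mono (w : List V) {ψ ψ' : U → ℝ≥0∞} (hψ : ψ ≤ ψ') :
    wordOp P h w ψ ≤ wordOp P h w ψ' := by
  induction w with
  | nil => exact hψ
  | cons c w ih => exact letterOp_mono ih

theorem wordOp_tsum_mul {ι : Type*} (w : List V) (r : ι → ℝ≥0∞) (ψ : ι → U → ℝ≥0∞) :
    wordOp P h w (fun u => ∑' i, r i * ψ i u) = fun u => ∑' i, r i * wordOp P h w (ψ i) u := by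
  induction w with
  | nil => rfl
  | cons c w ih => rw [wordOp_cons, ih, letterOp_tsum_mul]; rfl

theorem wordOp_mul_const (w : List V) (ψ : U → ℝ≥0∞) (r : ℝ≥0∞) :
    wordOp P h w (fun u => ψ u * r) = fun u => wordOp P h w ψ u * r := by
  induction w with
  | nil => rfl
  | cons c w ih => rw [wordOp_cons, ih, letterOp_mul_const]; rfl

theorem wordProb_singleton_id (P : V → V → ℝ≥0∞) (c z : V) : wordProb P id [c] z = P z c := by
  simp [wordProb, letterOp_id]

theorem wordProb_append_pair_id (P : V → V → ℝ≥0∞) (w : List V) (c c' z : V) :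
    wordProb P id (w ++ [c] ++ [c']) z = wordProb P id (w ++ [c]) z * P c c' := by
  rw [wordProb, wordProb, wordOp_append_singleton, wordOp_append_singleton,
    wordOp_append_singleton, letterOp_id, letterOp_id, letterOp_id]
  simp only [Pi.one_apply, mul_one]
  rw [wordOp_mul_const]

end WordOperators

section PathEvents

variable {U V : Type*}

def pathCylinder (t : ℕ) (a : ℕ → U) : Set (ℕ → U) := {ω | ∀ i ≤ t, ω i = a i}

def wordEvent (h : U → V) (t : ℕ) (w : List V) : Set (ℕ → U) :=
  {ω | ∀ j (hj : j < w.length), h (ω (t + 1 + j)) = w[j]}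

theorem wordEvent_nil (h : U → V) (t : ℕ) : wordEvent h t [] = Set.univ := by
  ext ω; simp [wordEvent]

theorem wordEvent_cons (h : U → V) (t : ℕ) (c : V) (w : List V) :
    wordEvent h t (c :: w) = {ω | h (ω (t + 1)) = c} ∩ wordEvent h (t + 1) w := by
  ext ω
  simp only [wordEvent, Set.mem_ofPred_eq, Set.mem_inter_iff, List.length_cons]
  constructor
  · intro hω
    refine ⟨hω 0 (by omega), fun j hj => ?_⟩
    have := hω (j + 1) (by omega)
    rwa [List.getElem_cons_succ, show t + 1 + (j + 1) = t + 1 + 1 + j by omega] at this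
  · rintro ⟨h0, hω⟩ (_ | j) hj
    · simpa using h0
    · simpa [show t + 1 + (j + 1) = t + 1 + 1 + j by omega] using hω j (by omega)

theorem pathCylinder_eq_iUnion (t : ℕ) (a : ℕ → U) :
    pathCylinder t a = ⋃ u, pathCylinder (t + 1) (Function.update a (t + 1) u) := by
  ext ω
  simp only [pathCylinder, Set.mem_ofPred_eq, Set.mem_iUnion]
  constructor
  · intro hω
    refine ⟨ω (t + 1), fun i hi => ?_⟩
    rcases Nat.lt_or_ge i (t + 1) with hit | hit
    · rw [Function.update_of_ne (by omega)]; exact hω i (by omega)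
    · obtain rfl : i = t + 1 := by omega
      simp
  · rintro ⟨u, hω⟩ i hi
    rw [hω i (by omega), Function.update_of_ne (by omega)]

theorem pairwise_disjoint_pathCylinder_update (t : ℕ) (a : ℕ → U) :
    Pairwise (Function.onFun Disjoint fun u =>
      pathCylinder (t + 1) (Function.update a (t + 1) u)) := by
  intro u u' huu'
  refine Set.disjoint_left.2 fun ω hω hω' => huu' ?_
  simpa using (hω (t + 1) le_rfl).symm.trans (hω' (t + 1) le_rfl)

theorem pathCylinder_update_inter (t : ℕ) (a : ℕ → U) (u : U) (h : U → V) (c : V) :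
    pathCylinder (t + 1) (Function.update a (t + 1) u) ∩ {ω | h (ω (t + 1)) = c} =
      if h u = c then pathCylinder (t + 1) (Function.update a (t + 1) u) else ∅ := by
  ext ω
  constructor
  · rintro ⟨hω, hc⟩
    have hu : ω (t + 1) = u := by simpa using hω (t + 1) le_rfl
    simp only [Set.mem_ofPred_eq, hu] at hc
    simpa [hc] using hω
  · intro hω
    split_ifs at hω with hc
    · refine ⟨hω, ?_⟩
      simpa [hc] using congrArg h (hω (t + 1) le_rfl)
    · exact absurd hω (Set.notMem_empty ω)

variable [MeasurableSpace U] [MeasurableSingletonClass U]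

theorem measurableSet_pathCylinder (t : ℕ) (a : ℕ → U) : MeasurableSet (pathCylinder t a) := by
  have : pathCylinder t a = ⋂ i, ⋂ (_ : i ≤ t), (fun ω : ℕ → U => ω i) ⁻¹' {a i} := by
    ext ω; simp [pathCylinder]
  rw [this]
  exact .iInter fun i => .iInter fun _ => measurable_pi_apply i (measurableSet_singleton _)

theorem measurableSet_wordEvent [Countable U] (h : U → V) (t : ℕ) (w : List V) :
    MeasurableSet (wordEvent h t w) := by
  have : wordEvent h t w = ⋂ j, ⋂ (hj : j < w.length),
      (fun ω : ℕ → U => ω (t + 1 + j)) ⁻¹' (h ⁻¹' {w[j]}) := by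
    ext ω; simp [wordEvent]
  rw [this]
  exact .iInter fun j => .iInter fun _ =>
    measurable_pi_apply _ (Set.to_countable _).measurableSet

end PathEvents

namespace IsMarkovChain

variable {U V : Type*} [MeasurableSpace U] {v : U → ℝ≥0∞} {P : U → U → ℝ≥0∞} {μ : Measure (ℕ → U)}

theorem measure_pathCylinder_update (hμ : IsMarkovChain v P μ) (t : ℕ) (a : ℕ → U) (u : U) :
    μ (pathCylinder (t + 1) (Function.update a (t + 1) u)) = μ (pathCylinder t a) * P (a t) u := by
  have hprefix : ∀ i ≤ t, Function.update a (t + 1) u i = a i := fun i hi =>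
    Function.update_of_ne (by omega) _ _
  rw [pathCylinder, hμ.2.2.2, pathCylinder, hμ.2.2.2, Finset.prod_range_succ, hprefix 0 (by omega),
    hprefix t le_rfl, Function.update_self, mul_assoc]
  congr 2
  exact Finset.prod_congr rfl fun i hi => by
    rw [hprefix i (by simp at hi; omega), hprefix (i + 1) (by simp at hi; omega)]

theorem measure_pathCylinder_inter_wordEvent [MeasurableSingletonClass U] [Countable U]
    (hμ : IsMarkovChain v P μ) (h : U → V) (w : List V) (t : ℕ) (a : ℕ → U) :
    μ (pathCylinder t a ∩ wordEvent h t w) = μ (pathCylinder t a) * wordProb P h w (a t) := by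
  induction w generalizing t a with
  | nil => simp [wordEvent_nil, wordProb]
  | cons c w ih =>
    have hsplit : pathCylinder t a ∩ wordEvent h t (c :: w) = ⋃ u,
        pathCylinder (t + 1) (Function.update a (t + 1) u) ∩ {ω | h (ω (t + 1)) = c} ∩
          wordEvent h (t + 1) w := by
      rw [wordEvent_cons, pathCylinder_eq_iUnion, ← Set.inter_assoc, Set.iUnion_inter,
        Set.iUnion_inter]
    have hpiece (u : U) : μ (pathCylinder (t + 1) (Function.update a (t + 1) u) ∩
        {ω | h (ω (t + 1)) = c} ∩ wordEvent h (t + 1) w) =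
          μ (pathCylinder t a) * ((if h u = c then P (a t) u else 0) * wordProb P h w u) := by
      rw [pathCylinder_update_inter]
      split_ifs
      · rw [ih, measure_pathCylinder_update hμ, Function.update_self, mul_assoc]
      · simp
    rw [hsplit, measure_iUnion, tsum_congr hpiece, ENNReal.tsum_mul_left]
    · rfl
    · exact fun u u' huu' => ((pairwise_disjoint_pathCylinder_update t a huu').mono
        Set.inter_subset_left Set.inter_subset_left).mono
          Set.inter_subset_left Set.inter_subset_left
    · exact fun u => ((measurableSet_pathCylinder _ _).inter
        (measurable_pi_apply (t + 1) (Set.to_countable (h ⁻¹' {c})).measurableSet)).inter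
          (measurableSet_wordEvent h _ w)

end IsMarkovChain

theorem exists_pathCylinder_measure_ne_zero {U : Type*} [MeasurableSpace U] [Countable U]
    {μ : Measure (ℕ → U)} {t : ℕ} {u : U} (hu : μ {ω | ω t = u} ≠ 0) :
    ∃ a : ℕ → U, a t = u ∧ μ (pathCylinder t a) ≠ 0 := by
  by_contra! hcon
  let extend (v : Fin (t + 1) → U) (i : ℕ) : U := if hi : i < t + 1 then v ⟨i, hi⟩ else u
  have hcover : {ω : ℕ → U | ω t = u} ⊆
      ⋃ v : {v : Fin (t + 1) → U // v (Fin.last t) = u}, pathCylinder t (extend v) := by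
    intro ω hω
    refine Set.mem_iUnion.2 ⟨⟨fun i => ω i, hω⟩, fun i hi => ?_⟩
    simp only [extend, dif_pos (show i < t + 1 by omega)]
  refine hu (measure_mono_null hcover (measure_iUnion_null fun v => hcon _ ?_))
  simp only [extend, dif_pos (Nat.lt_succ_self t)]
  exact v.2

theorem IsMarkovChain.exists_wordProb_le_mul {A C : Type*} [MeasurableSpace A]
    [MeasurableSingletonClass A] [Countable A] [MeasurableSpace C] [MeasurableSingletonClass C]
    [Countable C] {αX : A → ℝ≥0∞} {PX : A → A → ℝ≥0∞} {μX : Measure (ℕ → A)}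
    {αZ : C → ℝ≥0∞} {PZ : C → C → ℝ≥0∞} {μZ : Measure (ℕ → C)} {f : A → C}
    (hX : IsMarkovChain αX PX μX) (hZ : IsMarkovChain αZ PZ μZ)
    (hfX : μX.map (fun ω n => f (ω n)) = μZ) {a : A} (ha : ∃ t, μX {ω | ω t = a} ≠ 0) :
    ∃ κ : ℝ≥0∞, κ ≠ ⊤ ∧ ∀ w, wordProb PX f w a ≤ κ * wordProb PZ id w (f a) := by
  have := hX.1
  have := hZ.1
  obtain ⟨t, ht⟩ := ha
  obtain ⟨h, rfl, hp⟩ := exists_pathCylinder_measure_ne_zero ht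
  set p := μX (pathCylinder t h)
  have hmeas : Measurable fun (ω : ℕ → A) (n : ℕ) => f (ω n) :=
    measurable_pi_lambda _ fun n => (measurable_of_countable f).comp (measurable_pi_apply n)
  have hsub (w : List C) : pathCylinder t h ∩ wordEvent f t w ⊆
      (fun ω n => f (ω n)) ⁻¹' (pathCylinder t (f ∘ h) ∩ wordEvent id t w) := by
    rintro ω ⟨hcyl, hword⟩
    exact ⟨fun i hi => congrArg f (hcyl i hi), hword⟩
  have hkey (w : List C) : p * wordProb PX f w (h t) ≤ wordProb PZ id w (f (h t)) :=
    calc p * wordProb PX f w (h t) = μX (pathCylinder t h ∩ wordEvent f t w) :=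
          (hX.measure_pathCylinder_inter_wordEvent f w t h).symm
      _ ≤ μX ((fun ω n => f (ω n)) ⁻¹' (pathCylinder t (f ∘ h) ∩ wordEvent id t w)) :=
          measure_mono (hsub w)
      _ ≤ μZ (pathCylinder t (f ∘ h) ∩ wordEvent id t w) :=
          hfX ▸ Measure.le_map_apply hmeas.aemeasurable _
      _ = μZ (pathCylinder t (f ∘ h)) * wordProb PZ id w (f (h t)) :=
          hZ.measure_pathCylinder_inter_wordEvent id w t (f ∘ h)
      _ ≤ wordProb PZ id w (f (h t)) := mul_le_of_le_one_left' prob_le_one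
  refine ⟨p⁻¹, ENNReal.inv_ne_top.2 hp, fun w => ?_⟩
  calc wordProb PX f w (h t) = p⁻¹ * (p * wordProb PX f w (h t)) := by
        rw [← mul_assoc, ENNReal.inv_mul_cancel hp (measure_ne_top _ _), one_mul]
    _ ≤ p⁻¹ * wordProb PZ id w (f (h t)) := by gcongr; exact hkey w

noncomputable section CouplingBound

variable {A B C : Type*}

/-- The `X`-factor of `R`: `R((a,b),(a',b')) = lumpRatio PX PZ f a a' * PY b b'`. -/
def lumpRatio (P : A → A → ℝ≥0∞) (Q : C → C → ℝ≥0∞) (f : A → C) (a a' : A) : ℝ≥0∞ :=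
  if Q (f a) (f a') ≠ 0 then P a a' / Q (f a) (f a') else 0

theorem lumpRatio_mul_le (P : A → A → ℝ≥0∞) (Q : C → C → ℝ≥0∞) (f : A → C) (a a' : A) :
    lumpRatio P Q f a a' * Q (f a) (f a') ≤ P a a' := by
  unfold lumpRatio
  split_ifs
  · rw [mul_comm]; exact ENNReal.mul_div_le
  · simp

variable {PX : A → A → ℝ≥0∞} {PY : B → B → ℝ≥0∞} {PZ : C → C → ℝ≥0∞} {f : A → C} {g : B → C}
  {x : ℕ → A → B → ℝ≥0∞} {κ : B → ℝ≥0∞}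

/-- Unfolding `x (m + 1)` appends a letter to the word, so the induction on `m` has to run over
all words at once. -/
theorem wordOp_append_le_of_rec
    (hrec : ∀ m a b, f a = g b →
      x (m + 1) a b = ∑' a', lumpRatio PX PZ f a a' * letterOp PY g (f a') (x m a') b)
    (hx0 : ∀ a b, x 0 a b ≤ 1) (hPX : ∀ a, ∑' a', PX a a' ≤ 1)
    (hκ : ∀ w b, wordProb PY g w b ≤ κ b * wordProb PZ id w (g b)) (m : ℕ) :
    ∀ w b a, wordOp PY g (w ++ [f a]) (x m a) b ≤ κ b * wordProb PZ id (w ++ [f a]) (g b) := by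
  induction m with
  | zero =>
    intro w b a
    exact (wordOp_mono _ (hx0 a) b).trans (hκ _ b)
  | succ m ih =>
    intro w b a
    set Q := κ b * wordProb PZ id (w ++ [f a]) (g b)
    have hunfold : letterOp PY g (f a) (x (m + 1) a) = letterOp PY g (f a)
        (fun b' => ∑' a', lumpRatio PX PZ f a a' * letterOp PY g (f a') (x m a') b') :=
      letterOp_congr fun b' hb' => hrec m a b' hb'.symm
    have hstep (a' : A) : wordOp PY g (w ++ [f a] ++ [f a']) (x m a') b ≤ Q * PZ (f a) (f a') := by
      calc wordOp PY g (w ++ [f a] ++ [f a']) (x m a') b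
          ≤ κ b * wordProb PZ id (w ++ [f a] ++ [f a']) (g b) := ih _ b a'
        _ = Q * PZ (f a) (f a') := by rw [wordProb_append_pair_id, mul_assoc]
    calc wordOp PY g (w ++ [f a]) (x (m + 1) a) b
        = ∑' a', lumpRatio PX PZ f a a' * wordOp PY g (w ++ [f a] ++ [f a']) (x m a') b := by
          rw [wordOp_append_singleton, hunfold, letterOp_tsum_mul, wordOp_tsum_mul]
          simp only [← wordOp_append_singleton]
      _ ≤ ∑' a', Q * (lumpRatio PX PZ f a a' * PZ (f a) (f a')) := by
          refine ENNReal.tsum_le_tsum fun a' => ?_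
          calc lumpRatio PX PZ f a a' * wordOp PY g (w ++ [f a] ++ [f a']) (x m a') b
              ≤ lumpRatio PX PZ f a a' * (Q * PZ (f a) (f a')) := by gcongr; exact hstep a'
            _ = Q * (lumpRatio PX PZ f a a' * PZ (f a) (f a')) := by ring
      _ ≤ ∑' a', Q * PX a a' :=
          ENNReal.tsum_le_tsum fun a' => mul_le_mul_right (lumpRatio_mul_le PX PZ f a a') Q
      _ ≤ Q := by rw [ENNReal.tsum_mul_left]; exact mul_le_of_le_one_right' (hPX a)

theorem letterOp_le_of_rec
    (hrec : ∀ m a b, f a = g b →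
      x (m + 1) a b = ∑' a', lumpRatio PX PZ f a a' * letterOp PY g (f a') (x m a') b)
    (hx0 : ∀ a b, x 0 a b ≤ 1) (hPX : ∀ a, ∑' a', PX a a' ≤ 1)
    (hκ : ∀ w b, wordProb PY g w b ≤ κ b * wordProb PZ id w (g b)) (m : ℕ) (b : B) (a : A) :
    letterOp PY g (f a) (x m a) b ≤ κ b * PZ (g b) (f a) := by
  simpa [wordProb_singleton_id] using wordOp_append_le_of_rec hrec hx0 hPX hκ m [] b a

end CouplingBound

theorem IsStochastic.apply_ne_top {U : Type*} {P : U → U → ℝ≥0∞} (hP : IsStochastic P)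
    (u u' : U) : P u u' ≠ ⊤ :=
  ne_top_of_le_ne_top ENNReal.one_ne_top ((ENNReal.le_tsum u').trans (hP u).le)

noncomputable section Coupling

variable {A B C : Type*} (PX : A → A → ℝ≥0∞) (PY : B → B → ℝ≥0∞) (PZ : C → C → ℝ≥0∞)
  (f : A → C) (g : B → C)

def extendDelta (F : Delta f g → ℝ≥0∞) (a : A) (b : B) : ℝ≥0∞ :=
  if h : f a = g b then F ⟨(a, b), h⟩ else 0

variable {f g}

theorem tsum_delta_eq (F : Delta f g → ℝ≥0∞) :
    ∑' e, F e = ∑' p : A × B, extendDelta f g F p.1 p.2 := by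
  rw [← tsum_subtype_eq_of_support_subset (s := {p : A × B | f p.1 = g p.2})]
  · exact tsum_congr fun e => by simp [extendDelta, e.2]
  · intro p hp
    by_contra hfg
    exact hp (dif_neg hfg)

theorem Rmat_ne_top (hPX : IsStochastic PX) (hPY : IsStochastic PY) (d e : Delta f g) :
    Rmat PX PY PZ f g d e ≠ ⊤ := by
  unfold Rmat
  split_ifs with hz
  · exact ENNReal.div_ne_top (ENNReal.mul_ne_top (hPX.apply_ne_top _ _) (hPY.apply_ne_top _ _)) hz
  · exact ENNReal.zero_ne_top

theorem extendDelta_Rmat_mul_eq_left (d : Delta f g) (ψ : Delta f g → ℝ≥0∞) (a : A) (b : B) :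
    extendDelta f g (fun e => Rmat PX PY PZ f g d e * ψ e) a b =
      lumpRatio PX PZ f d.1.1 a *
        ((if g b = f a then PY d.1.2 b else 0) * extendDelta f g ψ a b) := by
  unfold extendDelta Rmat lumpRatio
  by_cases hab : f a = g b
  · simp only [dif_pos hab, if_pos hab.symm, div_eq_mul_inv]
    split_ifs
    · ring
    · simp
  · simp [hab]

theorem extendDelta_Rmat_mul_eq_right (d : Delta f g) (ψ : Delta f g → ℝ≥0∞) (a : A) (b : B) :
    extendDelta f g (fun e => Rmat PX PY PZ f g d e * ψ e) a b =
      lumpRatio PY PZ g d.1.2 b *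
        ((if f a = g b then PX d.1.1 a else 0) * extendDelta f g ψ a b) := by
  unfold extendDelta Rmat lumpRatio
  by_cases hab : f a = g b
  · have hz : PZ (g d.1.2) (g b) = PZ (f d.1.1) (f a) := by rw [← d.2, ← hab]
    simp only [dif_pos hab, if_pos hab, hz, div_eq_mul_inv]
    split_ifs
    · ring
    · simp
  · simp [hab]

theorem tsum_extendDelta_Rmat_mul_left (d : Delta f g) (ψ : Delta f g → ℝ≥0∞) (a : A) :
    ∑' b, extendDelta f g (fun e => Rmat PX PY PZ f g d e * ψ e) a b =
      lumpRatio PX PZ f d.1.1 a * letterOp PY g (f a) (extendDelta f g ψ a) d.1.2 := by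
  simp only [extendDelta_Rmat_mul_eq_left, ENNReal.tsum_mul_left, letterOp]

theorem tsum_extendDelta_Rmat_mul_right (d : Delta f g) (ψ : Delta f g → ℝ≥0∞) (b : B) :
    ∑' a, extendDelta f g (fun e => Rmat PX PY PZ f g d e * ψ e) a b =
      lumpRatio PY PZ g d.1.2 b * letterOp PX f (g b) (fun a => extendDelta f g ψ a b) d.1.1 := by
  simp only [extendDelta_Rmat_mul_eq_right, ENNReal.tsum_mul_left, letterOp]

theorem phim_succ_eq_tsum (d : Delta f g) (m : ℕ) :
    phim (Rmat PX PY PZ f g) (m + 1) d =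
      ∑' p : A × B,
        extendDelta f g (fun e => Rmat PX PY PZ f g d e * phim (Rmat PX PY PZ f g) m e) p.1 p.2 :=
  tsum_delta_eq _

theorem extendDelta_phim_succ_left (m : ℕ) (a : A) (b : B) (hab : f a = g b) :
    extendDelta f g (phim (Rmat PX PY PZ f g) (m + 1)) a b =
      ∑' a', lumpRatio PX PZ f a a' *
        letterOp PY g (f a') (extendDelta f g (phim (Rmat PX PY PZ f g) m) a') b := by
  rw [extendDelta, dif_pos hab, phim_succ_eq_tsum, ENNReal.tsum_prod']
  exact tsum_congr fun a' => tsum_extendDelta_Rmat_mul_left PX PY PZ _ _ a'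

theorem extendDelta_phim_succ_right (m : ℕ) (a : A) (b : B) (hab : f a = g b) :
    extendDelta f g (phim (Rmat PX PY PZ f g) (m + 1)) a b =
      ∑' b', lumpRatio PY PZ g b b' *
        letterOp PX f (g b') (fun a' => extendDelta f g (phim (Rmat PX PY PZ f g) m) a' b') a := by
  rw [extendDelta, dif_pos hab, phim_succ_eq_tsum, ENNReal.tsum_prod', ENNReal.tsum_comm]
  exact tsum_congr fun b' => tsum_extendDelta_Rmat_mul_right PX PY PZ _ _ b'

theorem extendDelta_phim_zero_le_one (a : A) (b : B) :
    extendDelta f g (phim (Rmat PX PY PZ f g) 0) a b ≤ 1 := by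
  unfold extendDelta
  split_ifs <;> simp [phim]

end Coupling

section Eigenvector

variable {A B C : Type*} {PX : A → A → ℝ≥0∞} {PY : B → B → ℝ≥0∞} {PZ : C → C → ℝ≥0∞}
  {f : A → C} {g : B → C} {κX : A → ℝ≥0∞} {κY : B → ℝ≥0∞}

theorem tsum_extendDelta_Rmat_mul_phim_left_le (hPX : IsStochastic PX)
    (hκY : ∀ w b, wordProb PY g w b ≤ κY b * wordProb PZ id w (g b))
    (d : Delta f g) (m : ℕ) (a : A) :
    ∑' b, extendDelta f g (fun e => Rmat PX PY PZ f g d e * phim (Rmat PX PY PZ f g) m e) a b ≤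
      κY d.1.2 * PX d.1.1 a := by
  have hletter := letterOp_le_of_rec (x := fun m => extendDelta f g (phim (Rmat PX PY PZ f g) m))
    (extendDelta_phim_succ_left PX PY PZ) (extendDelta_phim_zero_le_one PX PY PZ)
    (fun a => (hPX a).le) hκY m d.1.2 a
  rw [tsum_extendDelta_Rmat_mul_left]
  calc lumpRatio PX PZ f d.1.1 a * letterOp PY g (f a) _ d.1.2
      ≤ lumpRatio PX PZ f d.1.1 a * (κY d.1.2 * PZ (g d.1.2) (f a)) := by gcongr
    _ = κY d.1.2 * (lumpRatio PX PZ f d.1.1 a * PZ (f d.1.1) (f a)) := by rw [← d.2]; ring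
    _ ≤ κY d.1.2 * PX d.1.1 a := by gcongr; exact lumpRatio_mul_le PX PZ f _ a

theorem tsum_extendDelta_Rmat_mul_phim_right_le (hPY : IsStochastic PY)
    (hκX : ∀ w a, wordProb PX f w a ≤ κX a * wordProb PZ id w (f a))
    (d : Delta f g) (m : ℕ) (b : B) :
    ∑' a, extendDelta f g (fun e => Rmat PX PY PZ f g d e * phim (Rmat PX PY PZ f g) m e) a b ≤
      κX d.1.1 * PY d.1.2 b := by
  have hletter := letterOp_le_of_rec
    (x := fun m b a => extendDelta f g (phim (Rmat PX PY PZ f g) m) a b)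
    (fun m b a hba => extendDelta_phim_succ_right PX PY PZ m a b hba.symm)
    (fun b a => extendDelta_phim_zero_le_one PX PY PZ a b) (fun b => (hPY b).le) hκX m d.1.1 b
  rw [tsum_extendDelta_Rmat_mul_right]
  calc lumpRatio PY PZ g d.1.2 b * letterOp PX f (g b) _ d.1.1
      ≤ lumpRatio PY PZ g d.1.2 b * (κX d.1.1 * PZ (f d.1.1) (g b)) := by gcongr
    _ = κX d.1.1 * (lumpRatio PY PZ g d.1.2 b * PZ (g d.1.2) (g b)) := by rw [d.2]; ring
    _ ≤ κX d.1.1 * PY d.1.2 b := by gcongr; exact lumpRatio_mul_le PY PZ g _ b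

theorem tsum_Rmat_mul_eq_of_tendsto (hPX : IsStochastic PX) (hPY : IsStochastic PY)
    (hκXtop : ∀ a, κX a ≠ ⊤) (hκYtop : ∀ b, κY b ≠ ⊤)
    (hκX : ∀ w a, wordProb PX f w a ≤ κX a * wordProb PZ id w (f a))
    (hκY : ∀ w b, wordProb PY g w b ≤ κY b * wordProb PZ id w (g b))
    {φ : Delta f g → ℝ≥0∞}
    (hφ : ∀ d, Tendsto (fun m => phim (Rmat PX PY PZ f g) m d) atTop (𝓝 (φ d)))
    (d : Delta f g) :
    ∑' e, Rmat PX PY PZ f g d e * φ e = φ d := by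
  let T (m : ℕ) (p : A × B) : ℝ≥0∞ :=
    extendDelta f g (fun e => Rmat PX PY PZ f g d e * phim (Rmat PX PY PZ f g) m e) p.1 p.2
  rw [tsum_delta_eq]
  refine ENNReal.tsum_eq_of_tendsto_of_tight (F := T) (fun p => ?_)
    (by simpa only [Function.comp_def, phim_succ_eq_tsum] using
      (hφ d).comp (tendsto_add_atTop_nat 1))
    (ENNReal.tight_of_marginal_le (T := T) (u := fun a => κY d.1.2 * PX d.1.1 a)
      (v := fun b => κX d.1.1 * PY d.1.2 b) ?_ ?_
      (fun m a => tsum_extendDelta_Rmat_mul_phim_left_le hPX hκY d m a)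
      (fun m b => tsum_extendDelta_Rmat_mul_phim_right_le hPY hκX d m b))
  · simp only [T, extendDelta]
    split_ifs
    · exact ENNReal.Tendsto.const_mul (hφ _) (Or.inr (Rmat_ne_top PX PY PZ hPX hPY _ _))
    · exact tendsto_const_nhds
  · simpa [ENNReal.tsum_mul_left, hPX d.1.1] using hκYtop d.1.2
  · simpa [ENNReal.tsum_mul_left, hPY d.1.2] using hκXtop d.1.1

end Eigenvector

theorem tsum_mul_div_eq_one_of_eigen {D : Type*} {R : D → D → ℝ≥0∞} {φ : D → ℝ≥0∞} {d : D}
    (hφR : ∑' e, R d e * φ e = φ d) (hd : φ d ≠ 0) (hd' : φ d ≠ ⊤) :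
    ∑' e : {e : D // φ e ≠ 0}, R d e.1 * φ e.1 / φ d = 1 := by
  have hsupp : Function.support (fun e => R d e * φ e) ⊆ {e | φ e ≠ 0} := fun e he h0 =>
    he (by simp [h0])
  simp only [div_eq_mul_inv, ENNReal.tsum_mul_right]
  rw [show ∑' e : {e : D // φ e ≠ 0}, R d e.1 * φ e.1 = ∑' e, R d e * φ e from
    tsum_subtype_eq_of_support_subset hsupp, hφR, ENNReal.mul_inv_cancel hd hd']

/-- **`P` is stochastic.** The limit vector `φ` is a non-negative right eigenvector of `R` with
eigenvalue `1` on `Δ'`; equivalently the matrix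
`P((a,b),(a',b')) = R((a,b),(a',b')) * φ(a',b') / φ(a,b)` on `Δ'` is row-stochastic:
`Σ_{(a',b') ∈ Δ'} P((a,b),(a',b')) = 1` for every `(a,b) ∈ Δ'`. -/
theorem statement_12
    {A B C : Type*} [Countable A] [Countable B] [Countable C]
    [MeasurableSpace A] [MeasurableSingletonClass A]
    [MeasurableSpace B] [MeasurableSingletonClass B]
    [MeasurableSpace C] [MeasurableSingletonClass C]
    (αX : A → ℝ≥0∞) (PX : A → A → ℝ≥0∞) (μX : Measure (ℕ → A))
    (αY : B → ℝ≥0∞) (PY : B → B → ℝ≥0∞) (μY : Measure (ℕ → B))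
    (αZ : C → ℝ≥0∞) (PZ : C → C → ℝ≥0∞) (μZ : Measure (ℕ → C))
    (f : A → C) (g : B → C)
    (hX : IsMarkovChain αX PX μX) (hY : IsMarkovChain αY PY μY)
    (hZ : IsMarkovChain αZ PZ μZ)
    (hfX : μX.map (fun ω n => f (ω n)) = μZ)
    (hgY : μY.map (fun ω n => g (ω n)) = μZ)
    (hAvis : ∀ a : A, ∃ t : ℕ, μX {ω | ω t = a} ≠ 0)
    (hBvis : ∀ b : B, ∃ t : ℕ, μY {ω | ω t = b} ≠ 0)
    (φ : Delta f g → ℝ≥0∞)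
    (hφ : ∀ d : Delta f g,
      Tendsto (fun m => phim (Rmat PX PY PZ f g) m d) atTop (𝓝 (φ d)))
    (hφfin : ∀ d : Delta f g, φ d ≠ ⊤) :
    (∀ d : Delta f g, φ d ≠ 0 →
      ∑' e : Delta f g, Rmat PX PY PZ f g d e * φ e = φ d) ∧
    (∀ d : Delta f g, φ d ≠ 0 →
      ∑' e : {e : Delta f g // φ e ≠ 0},
        Rmat PX PY PZ f g d e.1 * φ e.1 / φ d = 1) := by
  choose κX hκXtop hκX using fun a => hX.exists_wordProb_le_mul hZ hfX (hAvis a)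
  choose κY hκYtop hκY using fun b => hY.exists_wordProb_le_mul hZ hgY (hBvis b)
  have heigen (d : Delta f g) : ∑' e, Rmat PX PY PZ f g d e * φ e = φ d :=
    tsum_Rmat_mul_eq_of_tendsto hX.2.2.1 hY.2.2.1 hκXtop hκYtop (fun w a => hκX a w)
      (fun w b => hκY b w) hφ d
  exact ⟨fun d _ => heigen d, fun d hd => tsum_mul_div_eq_one_of_eigen (heigen d) hd (hφfin d)⟩
end
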